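/- arXiv:1409.2937 — 2 statements merged into one kernel-verified Lean document; each statement's English description precedes it below -/
import Mathlib

section
/- For all positive integers n coprime to 5, the number of divisors d(n) satisfies d(n) ≤ 3.05 · n^(1/3). -/
/-!
Since `d` is multiplicative, `d(n)^3 / n = ∏_{p^a ∥ n} (a+1)^3 / p^a`. The factor
`(a+1)^3 / p^a` is at most `1` for `p ≥ 8` (as `a + 1 ≤ 2^a`), and its maximum over `a` is
`8` for `p = 2`, `3` for `p = 3` and `8/7` for `p = 7`; excluding `p = 5` therefore gives
`d(n)^3 ≤ (192/7) n`, and `192/7 < 3.05^3`.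
-/

open Finset

lemma prod_le_prod_of_eq_one_of_notMem {ι R : Type*} [CommSemiring R] [PartialOrder R]
    [IsOrderedRing R] [DecidableEq ι] {s t : Finset ι} {f : ι → R} (h1 : ∀ i, 1 ≤ f i)
    (hf : ∀ i ∉ t, f i = 1) : ∏ i ∈ s, f i ≤ ∏ i ∈ t, f i :=
  calc ∏ i ∈ s, f i ≤ ∏ i ∈ s ∪ t, f i :=
        prod_le_prod_of_subset_of_one_le subset_union_left
          (fun i _ ↦ zero_le_one.trans (h1 i)) fun i _ _ ↦ h1 i
    _ = ∏ i ∈ t, f i :=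
        (prod_subset subset_union_right fun i _ hi ↦ hf i hi).symm

lemma Nat.le_mul_pow_of_succ_le {f : ℕ → ℕ} {p k m a₀ : ℕ}
    (hbase : ∀ a ≤ a₀, k * f a ≤ m * p ^ a) (hstep : ∀ b ≥ a₀, f (b + 1) ≤ p * f b) (a : ℕ) :
    k * f a ≤ m * p ^ a := by
  rcases le_total a a₀ with ha | ha
  · exact hbase a ha
  induction a, ha using Nat.le_induction with
  | base => exact hbase a₀ le_rfl
  | succ b hb ih =>
    calc k * f (b + 1) ≤ k * (p * f b) := Nat.mul_le_mul_left k (hstep b hb)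
      _ = p * (k * f b) := by ring
      _ ≤ p * (m * p ^ b) := Nat.mul_le_mul_left p ih
      _ = m * p ^ (b + 1) := by ring

lemma succ_pow_three_le_two_pow (a : ℕ) : (a + 1) ^ 3 ≤ 8 * 2 ^ a := by
  simpa using Nat.le_mul_pow_of_succ_le (f := fun a ↦ (a + 1) ^ 3) (k := 1) (a₀ := 3)
    (by decide) (fun b hb ↦ by nlinarith [sq_nonneg (b - 3), sq_nonneg (b + 1)]) a

lemma succ_pow_three_le_three_pow (a : ℕ) : (a + 1) ^ 3 ≤ 3 * 3 ^ a := by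
  simpa using Nat.le_mul_pow_of_succ_le (f := fun a ↦ (a + 1) ^ 3) (k := 1) (a₀ := 2)
    (by decide) (fun b hb ↦ by nlinarith [sq_nonneg (b - 2), sq_nonneg (b + 1)]) a

lemma succ_pow_three_le_seven_pow (a : ℕ) : 7 * (a + 1) ^ 3 ≤ 8 * 7 ^ a :=
  Nat.le_mul_pow_of_succ_le (f := fun a ↦ (a + 1) ^ 3) (a₀ := 1)
    (by decide) (fun b hb ↦ by nlinarith [sq_nonneg (b - 1), sq_nonneg (b + 1)]) a

lemma succ_pow_three_le_pow {p : ℕ} (hp : 8 ≤ p) (a : ℕ) : (a + 1) ^ 3 ≤ p ^ a :=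
  calc (a + 1) ^ 3 ≤ (2 ^ a) ^ 3 := Nat.pow_le_pow_left Nat.lt_two_pow_self 3
    _ = 8 ^ a := by rw [← pow_mul, mul_comm, pow_mul]; norm_num
    _ ≤ p ^ a := Nat.pow_le_pow_left hp a

/-- `sup_a (a+1)^3 / p^a` for every prime `p ≠ 5`. -/
noncomputable def divisorCubeConst (p : ℕ) : ℝ :=
  if p = 2 then 8 else if p = 3 then 3 else if p = 7 then 8 / 7 else 1

lemma one_le_divisorCubeConst (p : ℕ) : 1 ≤ divisorCubeConst p := by
  unfold divisorCubeConst
  split_ifs <;> norm_num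

lemma succ_pow_three_le_divisorCubeConst_mul {p : ℕ} (hp : p.Prime) (hp5 : p ≠ 5) (a : ℕ) :
    ((a : ℝ) + 1) ^ 3 ≤ divisorCubeConst p * (p : ℝ) ^ a := by
  unfold divisorCubeConst
  split_ifs with h2 h3 h7
  · subst h2; exact_mod_cast succ_pow_three_le_two_pow a
  · subst h3; exact_mod_cast succ_pow_three_le_three_pow a
  · subst h7
    have h : (7 : ℝ) * ((a : ℝ) + 1) ^ 3 ≤ 8 * 7 ^ a := by
      exact_mod_cast succ_pow_three_le_seven_pow a
    push_cast
    linarith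
  · have hp8 : 8 ≤ p := by
      by_contra! hlt
      interval_cases p <;> simp_all +decide
    rw [one_mul]
    exact_mod_cast succ_pow_three_le_pow hp8 a

lemma card_divisors_pow_le_prod_mul {n k : ℕ} (hn : n ≠ 0) (c : ℕ → ℝ)
    (hc : ∀ p ∈ n.primeFactors,
      ((n.factorization p : ℝ) + 1) ^ k ≤ c p * (p : ℝ) ^ n.factorization p) :
    (n.divisors.card : ℝ) ^ k ≤ (∏ p ∈ n.primeFactors, c p) * n := by
  have hn_prod : (n : ℝ) = ∏ p ∈ n.primeFactors, (p : ℝ) ^ n.factorization p := by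
    exact_mod_cast (Nat.prod_factorization_pow_eq_self hn).symm
  rw [Nat.card_divisors hn, hn_prod, ← prod_mul_distrib]
  push_cast
  rw [← prod_pow]
  exact prod_le_prod (fun _ _ ↦ by positivity) hc

lemma le_mul_rpow_one_third {x y C : ℝ} (hy : 0 ≤ y) (hC : 0 ≤ C) (h : x ^ 3 ≤ C ^ 3 * y) :
    x ≤ C * y ^ ((1 : ℝ) / 3) := by
  refine le_of_pow_le_pow_left₀ three_ne_zero (by positivity) ?_
  rw [mul_pow, ← Real.rpow_natCast (y ^ _), ← Real.rpow_mul hy]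
  norm_num [h]

theorem divisor_bound_coprime_five_general (n : ℕ) (h5 : Nat.Coprime n 5) :
    ((n.divisors.card : ℝ)) ≤ 3.05 * (n : ℝ) ^ ((1 : ℝ) / 3) := by
  have hn : n ≠ 0 := by rintro rfl; norm_num at h5
  have hp5 : ∀ p ∈ n.primeFactors, p ≠ 5 := by
    rintro p hp rfl
    exact (Nat.prime_five.coprime_iff_not_dvd.1 h5.symm) (Nat.dvd_of_mem_primeFactors hp)
  have hconst : ∏ p ∈ n.primeFactors, divisorCubeConst p ≤ 192 / 7 :=
    calc ∏ p ∈ n.primeFactors, divisorCubeConst p ≤ ∏ p ∈ {2, 3, 7}, divisorCubeConst p :=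
          prod_le_prod_of_eq_one_of_notMem one_le_divisorCubeConst fun p hp ↦ by
            simp only [mem_insert, mem_singleton, not_or] at hp
            simp [divisorCubeConst, hp]
      _ = 192 / 7 := by norm_num [divisorCubeConst]
  refine le_mul_rpow_one_third n.cast_nonneg (by norm_num) ?_
  calc (n.divisors.card : ℝ) ^ 3 ≤ (∏ p ∈ n.primeFactors, divisorCubeConst p) * n :=
        card_divisors_pow_le_prod_mul hn _ fun p hp ↦
          succ_pow_three_le_divisorCubeConst_mul (Nat.prime_of_mem_primeFactors hp) (hp5 p hp) _
    _ ≤ 192 / 7 * n := by gcongr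
    _ ≤ 3.05 ^ 3 * n := by gcongr; norm_num

theorem divisor_bound_coprime_five (n : ℕ) (hn : 0 < n) (h5 : Nat.Coprime n 5) :
    ((n.divisors.card : ℝ)) ≤ 3.05 * (n : ℝ) ^ ((1 : ℝ) / 3) :=
  divisor_bound_coprime_five_general n h5
end

section
/- For all positive integers n coprime to 6, the number of divisors d(n) satisfies d(n) ≤ 1.23 · n^(1/3). -/
/-! `d(n) ^ 3 / n` is multiplicative, and on a prime power `p ^ a` it is `(a + 1) ^ 3 / p ^ a`.
This is at most `1` for `p ≥ 11`, and for `p = 5, 7` it is largest at `a = 1`, with value `8 / p`.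
Hence `d(n) ^ 3 ≤ (64 / 35) n` when `n` is coprime to `6`, and `(64 / 35) ^ (1 / 3) < 1.223`. -/

open Finset

namespace Nat

theorem mul_succ_pow_three_le_mul_pow {k c d : ℕ} (hk : 4 ≤ k) (h₀ : c ≤ d) (h₁ : 8 * c ≤ d * k)
    (a : ℕ) : c * (a + 1) ^ 3 ≤ d * k ^ a := by
  rcases Nat.eq_zero_or_pos a with rfl | ha
  · simpa using h₀
  induction a, ha using Nat.le_induction with
  | base => linarith
  | succ a ha ih =>
    -- for `a ≥ 1` the left side grows by a factor `((a + 2) / (a + 1)) ^ 3 ≤ 27 / 8 < k`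
    have hratio : 8 * (a + 2) ^ 3 ≤ 27 * (a + 1) ^ 3 := by
      calc 8 * (a + 2) ^ 3 = (2 * a + 4) ^ 3 := by ring
        _ ≤ (3 * a + 3) ^ 3 := Nat.pow_le_pow_left (by omega) 3
        _ = 27 * (a + 1) ^ 3 := by ring
    have h8 : 8 * (c * (a + 1 + 1) ^ 3) ≤ 8 * (d * k ^ (a + 1)) := by
      calc 8 * (c * (a + 1 + 1) ^ 3) = c * (8 * (a + 2) ^ 3) := by ring
        _ ≤ c * (27 * (a + 1) ^ 3) := Nat.mul_le_mul_left c hratio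
        _ = 27 * (c * (a + 1) ^ 3) := by ring
        _ ≤ 27 * (d * k ^ a) := Nat.mul_le_mul_left 27 ih
        _ ≤ 8 * k * (d * k ^ a) := Nat.mul_le_mul_right _ (by omega)
        _ = 8 * (d * k ^ (a + 1)) := by ring
    omega

theorem card_divisors_prime_pow_mul {p m : ℕ} (hp : p.Prime) (hpm : ¬p ∣ m) (a : ℕ) :
    #(p ^ a * m).divisors = (a + 1) * #m.divisors := by
  rw [Coprime.card_divisors_mul ((hp.coprime_iff_not_dvd.mpr hpm).pow_left a),
    ← ArithmeticFunction.sigma_zero_apply, ArithmeticFunction.sigma_zero_apply_prime_pow hp]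

theorem card_divisors_pow_three_le_self {m : ℕ} (hm : ∀ p ∈ m.primeFactors, 11 ≤ p) :
    #m.divisors ^ 3 ≤ m := by
  rcases eq_or_ne m 0 with rfl | hm0
  · simp
  calc #m.divisors ^ 3 = ∏ p ∈ m.primeFactors, (m.factorization p + 1) ^ 3 := by
        rw [card_divisors hm0, prod_pow]
    _ ≤ ∏ p ∈ m.primeFactors, p ^ m.factorization p :=
        prod_le_prod' fun p hp => by
          simpa using mul_succ_pow_three_le_mul_pow (c := 1) (d := 1) (by linarith [hm p hp]) le_rfl
            (by linarith [hm p hp]) (m.factorization p)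
    _ = m := prod_factorization_pow_eq_self hm0

theorem Prime.eleven_le {p : ℕ} (hp : p.Prime) (h2 : p ≠ 2) (h3 : p ≠ 3) (h5 : p ≠ 5)
    (h7 : p ≠ 7) : 11 ≤ p := by
  by_contra! hlt
  interval_cases p <;> norm_num at *

theorem card_divisors_pow_three_le_of_coprime_six {n : ℕ} (h6 : n.Coprime 6) :
    35 * #n.divisors ^ 3 ≤ 64 * n := by
  rcases eq_or_ne n 0 with rfl | hn
  · simp
  obtain ⟨a, k, h5k, rfl⟩ := exists_eq_pow_mul_and_not_dvd hn 5 (by norm_num)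
  obtain ⟨b, m, h7m, rfl⟩ := exists_eq_pow_mul_and_not_dvd (right_ne_zero_of_mul hn) 7 (by norm_num)
  have h5m : ¬5 ∣ m := fun h => h5k (h.mul_left _)
  have hm : ∀ p ∈ m.primeFactors, 11 ≤ p := by
    intro p hp
    have hpm := dvd_of_mem_primeFactors hp
    have hpn : p ∣ 5 ^ a * (7 ^ b * m) := (hpm.mul_left _).mul_left _
    refine (prime_of_mem_primeFactors hp).eleven_le ?_ ?_ ?_ ?_ <;> rintro rfl
    · exact not_coprime_of_dvd_of_dvd one_lt_two hpn (by norm_num) h6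
    · exact not_coprime_of_dvd_of_dvd (by norm_num) hpn (by norm_num) h6
    · exact h5m hpm
    · exact h7m hpm
  rw [card_divisors_prime_pow_mul (by norm_num) h5k, card_divisors_prime_pow_mul (by norm_num) h7m]
  calc 35 * ((a + 1) * ((b + 1) * #m.divisors)) ^ 3
      = (5 * (a + 1) ^ 3) * ((7 * (b + 1) ^ 3) * #m.divisors ^ 3) := by ring
    _ ≤ (8 * 5 ^ a) * ((8 * 7 ^ b) * m) :=
        Nat.mul_le_mul (mul_succ_pow_three_le_mul_pow (by norm_num) (by norm_num) (by norm_num) a)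
          (Nat.mul_le_mul (mul_succ_pow_three_le_mul_pow (by norm_num) (by norm_num) (by norm_num) b)
            (card_divisors_pow_three_le_self hm))
    _ = 64 * (5 ^ a * (7 ^ b * m)) := by ring

end Nat

theorem Real.le_mul_rpow_one_div_of_pow_le {x y c : ℝ} {k : ℕ} (hk : k ≠ 0) (hy : 0 ≤ y) (hc : 0 ≤ c)
    (h : x ^ k ≤ c ^ k * y) : x ≤ c * y ^ ((1 : ℝ) / k) := by
  refine le_of_pow_le_pow_left₀ hk (by positivity) ?_
  rwa [mul_pow, one_div, Real.rpow_inv_natCast_pow hy hk]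

theorem divisor_bound_coprime_six_general (n : ℕ) (h6 : Nat.Coprime n 6) :
    ((n.divisors.card : ℝ)) ≤ 1.23 * (n : ℝ) ^ ((1 : ℝ) / 3) := by
  have hcube : (n.divisors.card : ℝ) ^ 3 ≤ 1.23 ^ 3 * n := by
    have h : (35 * n.divisors.card ^ 3 : ℝ) ≤ 64 * n := by
      exact_mod_cast Nat.card_divisors_pow_three_le_of_coprime_six h6
    linarith [n.cast_nonneg (α := ℝ)]
  simpa using Real.le_mul_rpow_one_div_of_pow_le three_ne_zero n.cast_nonneg (by norm_num) hcube

theorem divisor_bound_coprime_six (n : ℕ) (hn : 0 < n) (h6 : Nat.Coprime n 6) :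
    ((n.divisors.card : ℝ)) ≤ 1.23 * (n : ℝ) ^ ((1 : ℝ) / 3) :=
  divisor_bound_coprime_six_general n h6
end
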